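/- (Proposition 1(ii)) Fix ε ∈ (0,1) and γ ∈ (0,1), assume 1−γ*(x) ∈ (0,1) and r(C_{1−γ*(x)}) = r(Ψ). Then among all measurable sets A ⊆ Ψ satisfying Π(A|x) ≥ γ*(x) and r(A^c) = r(Ψ), the complement (C_{1−γ*(x)})^c of the (1−γ*(x))-relative belief credible region minimizes δ: for every such A, δ((C_{1−γ*(x)})^c) ≤ δ(A). -/

import Mathlib

open MeasureTheory Set

variable {Ω : Type*} [MeasurableSpace Ω]

/-- The posterior probability of a set `A` when the prior is `μ` and the likelihood
(conditional prior predictive density `ψ ↦ m(x|ψ)`) is `f`. -/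
noncomputable def postProb (f : Ω → ℝ) (μ : Measure Ω) (A : Set Ω) : ℝ :=
  (∫ ψ in A, f ψ ∂μ) / (∫ ψ, f ψ ∂μ)

/-- The ε-contaminated prior `(1−ε)P + εQ`. -/
noncomputable def contam (P Q : Measure Ω) (ε : ℝ) : Measure Ω :=
  ENNReal.ofReal (1 - ε) • P + ENNReal.ofReal ε • Q

/-- `r(A) = sup_{ψ ∈ A} f(ψ) / m` (equal to `0` when `A = ∅` since `Real.sSup ∅ = 0`). -/
noncomputable def rSup (f : Ω → ℝ) (P : Measure Ω) (A : Set Ω) : ℝ :=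
  sSup (f '' A) / ∫ ψ, f ψ ∂P

/-- The upper posterior probability over all ε-contaminations. -/
noncomputable def upperPost (f : Ω → ℝ) (P : Measure Ω) (ε : ℝ) (A : Set Ω) : ℝ :=
  ⨆ Q : ProbabilityMeasure Ω, postProb f (contam P (Q : Measure Ω) ε) A


/-- The lower posterior probability over all ε-contaminations. -/
noncomputable def lowerPost (f : Ω → ℝ) (P : Measure Ω) (ε : ℝ) (A : Set Ω) : ℝ :=
  ⨅ Q : ProbabilityMeasure Ω, postProb f (contam P (Q : Measure Ω) ε) A

/-- `δ(A) = Π^{upper}(A|x) − Π^{lower}(A|x)`. -/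
noncomputable def deltaPost (f : Ω → ℝ) (P : Measure Ω) (ε : ℝ) (A : Set Ω) : ℝ :=
  upperPost f P ε A - lowerPost f P ε A

/-- The relative belief ratio `RB(ψ) = f(ψ)/m`. -/
noncomputable def RBr (f : Ω → ℝ) (P : Measure Ω) (ψ : Ω) : ℝ :=
  f ψ / ∫ x, f x ∂P

/-- `c_γ = inf {k ≥ 0 : Π({ψ : RB(ψ) ≤ k}|x) ≥ 1 − γ}`. -/
noncomputable def cGamma (f : Ω → ℝ) (P : Measure Ω) (γ : ℝ) : ℝ :=
  sInf {k : ℝ | 0 ≤ k ∧ 1 - γ ≤ postProb f P {ψ | RBr f P ψ ≤ k}}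

/-- The γ-relative belief credible region `C_γ = {ψ : RB(ψ) ≥ c_γ}`. -/
noncomputable def credRegion (f : Ω → ℝ) (P : Measure Ω) (γ : ℝ) : Set Ω :=
  {ψ | cGamma f P γ ≤ RBr f P ψ}

/-!
Both posterior bounds are attained in the limit by point-mass contaminations `Q = δ_ψ`:
`Π^lower(A|x) = (1-ε) ∫_A f dΠ / ((1-ε) m + ε sup_{Aᶜ} f)` and `Π^upper(A|x) = 1 - Π^lower(Aᶜ|x)`.
Hence `δ(A) = 1 - Π^lower(Aᶜ|x) - Π^lower(A|x)` is at most the value `Φ(Π(A|x), r(A))` it takes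
when `sup_{Aᶜ} f = sup f`, and `Φ` is nondecreasing in both arguments. The complement of
`C_{1-γ*}` is `{RB < c}` with `c = c_{1-γ*}`; by left-continuity of `k ↦ Π(RB ≤ k | x)` its
content is at most `γ*`, and its `r` is at most `c`. An admissible `A` has content at least `γ*`,
so `A ⊆ {RB ≤ r(A)}` forces `c ≤ r(A)`, `c` being an infimum.
-/

lemma sub_div_add_div_le_sub_div_add_div {m a a' d d' D : ℝ} (ha : a' ≤ a) (ham : a ≤ m)
    (hd' : 0 < d') (hd : d' ≤ d) (hD : d ≤ D) :
    (m - a) / d + a / D ≤ (m - a') / d' + a' / D := by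
  have hd0 : 0 < d := hd'.trans_le hd
  have hD0 : 0 < D := hd0.trans_le hD
  have key (a d : ℝ) (hd : d ≠ 0) :
      (m - a) / d + a / D = m / D + (m - a) * (1 / d - 1 / D) := by
    field_simp
    ring
  rw [key a d hd0.ne', key a' d' hd'.ne']
  refine (add_le_add_iff_left _).2 (mul_le_mul (by linarith) ?_ ?_ (by linarith))
  · exact sub_le_sub_right (one_div_le_one_div_of_le hd' hd) _
  · exact sub_nonneg.2 (one_div_le_one_div_of_le hd0 hD)

lemma IsClosed.apply_csSup_mem {α β : Type*} [ConditionallyCompleteLinearOrder α]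
    [TopologicalSpace α] [OrderTopology α] [TopologicalSpace β] {g : α → β} {S : Set α}
    {K : Set β} (hK : IsClosed K) (hS : S.Nonempty) (hbdd : BddAbove S)
    (hg : ContinuousAt g (sSup S)) (hSK : MapsTo g S K) : g (sSup S) ∈ K :=
  hK.closure_subset_iff.2 hSK.image_subset
    (hg.continuousWithinAt.mem_closure_image (csSup_mem_closure hS hbdd))

lemma setIntegral_setOf_lt_le {f g : Ω → ℝ} {μ : Measure Ω} (hfi : Integrable f μ)
    (hg : Measurable g) {c L : ℝ} (h : ∀ k < c, ∫ x in {x | g x ≤ k}, f x ∂μ ≤ L) :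
    ∫ x in {x | g x < c}, f x ∂μ ≤ L := by
  obtain ⟨u, hu_mono, hu_lt, hu_tend⟩ := exists_seq_strictMono_tendsto c
  have hunion : ⋃ n, {x | g x ≤ u n} = {x | g x < c} := by
    ext x
    simp only [mem_iUnion]
    exact ⟨fun ⟨n, hn⟩ => hn.trans_lt (hu_lt n),
      fun hx => ((hu_tend.eventually (eventually_gt_nhds hx)).exists).imp fun _ => le_of_lt⟩
  have htend := tendsto_setIntegral_of_monotone (μ := μ) (s := fun n => {x | g x ≤ u n})
    (fun n => measurableSet_le hg measurable_const)
    (fun n n' hnn' x (hx : g x ≤ u n) => hx.trans (hu_mono.monotone hnn')) hfi.integrableOn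
  rw [hunion] at htend
  exact le_of_tendsto' htend fun n => h _ (hu_lt n)

section Contamination

variable {f : Ω → ℝ} {μ P Q : Measure Ω} {ε : ℝ} {A : Set Ω}

lemma integrable_of_nonneg_of_le [IsFiniteMeasure μ] (hf : Measurable f) (hf0 : ∀ ψ, 0 ≤ f ψ)
    {C : ℝ} (hfC : ∀ ψ, f ψ ≤ C) : Integrable f μ :=
  .of_bound hf.aestronglyMeasurable C
    (.of_forall fun ψ => by rw [Real.norm_of_nonneg (hf0 ψ)]; exact hfC ψ)

lemma postProb_nonneg (hf0 : ∀ ψ, 0 ≤ f ψ) (μ : Measure Ω) (A : Set Ω) :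
    0 ≤ postProb f μ A :=
  div_nonneg (integral_nonneg hf0) (integral_nonneg hf0)

lemma bddBelow_range_postProb (hf0 : ∀ ψ, 0 ≤ f ψ) {ι : Type*} (μ : ι → Measure Ω) (A : Set Ω) :
    BddBelow (range fun i => postProb f (μ i) A) :=
  ⟨0, by rintro _ ⟨i, rfl⟩; exact postProb_nonneg hf0 _ _⟩

lemma postProb_mono (hf0 : ∀ ψ, 0 ≤ f ψ) (hfi : Integrable f μ) {A B : Set Ω} (hAB : A ⊆ B) :
    postProb f μ A ≤ postProb f μ B :=
  div_le_div_of_nonneg_right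
    (setIntegral_mono_set hfi.integrableOn (.of_forall hf0) (.of_forall hAB)) (integral_nonneg hf0)

lemma postProb_compl (hfi : Integrable f μ) (hμ : ∫ ψ, f ψ ∂μ ≠ 0) (hA : MeasurableSet A) :
    postProb f μ Aᶜ = 1 - postProb f μ A := by
  rw [postProb, postProb, setIntegral_compl hA hfi, sub_div, div_self hμ]

lemma contam_restrict (P Q : Measure Ω) (ε : ℝ) (A : Set Ω) :
    (contam P Q ε).restrict A = contam (P.restrict A) (Q.restrict A) ε := by
  simp only [contam, Measure.restrict_add, Measure.restrict_smul]

lemma integrable_contam (hP : Integrable f P) (hQ : Integrable f Q) :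
    Integrable f (contam P Q ε) :=
  (hP.smul_measure ENNReal.ofReal_ne_top).add_measure (hQ.smul_measure ENNReal.ofReal_ne_top)

lemma integral_contam (hP : Integrable f P) (hQ : Integrable f Q) (hε0 : 0 ≤ ε) (hε1 : ε ≤ 1) :
    ∫ ψ, f ψ ∂(contam P Q ε) = (1 - ε) * ∫ ψ, f ψ ∂P + ε * ∫ ψ, f ψ ∂Q := by
  rw [contam, integral_add_measure (hP.smul_measure ENNReal.ofReal_ne_top)
      (hQ.smul_measure ENNReal.ofReal_ne_top), integral_smul_measure, integral_smul_measure,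
    ENNReal.toReal_ofReal (sub_nonneg.2 hε1), ENNReal.toReal_ofReal hε0, smul_eq_mul, smul_eq_mul]

lemma integral_contam_pos (hf0 : ∀ ψ, 0 ≤ f ψ) (hP : Integrable f P) (hQ : Integrable f Q)
    (hm : 0 < ∫ ψ, f ψ ∂P) (hε : ε ∈ Ioo 0 1) :
    0 < ∫ ψ, f ψ ∂(contam P Q ε) := by
  rw [integral_contam hP hQ hε.1.le hε.2.le]
  exact add_pos_of_pos_of_nonneg (mul_pos (sub_pos.2 hε.2) hm)
    (mul_nonneg hε.1.le (integral_nonneg hf0))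

lemma postProb_contam (hP : Integrable f P) (hQ : Integrable f Q) (hε0 : 0 ≤ ε) (hε1 : ε ≤ 1)
    (A : Set Ω) :
    postProb f (contam P Q ε) A
      = ((1 - ε) * ∫ ψ in A, f ψ ∂P + ε * ∫ ψ in A, f ψ ∂Q)
        / ((1 - ε) * ∫ ψ, f ψ ∂P + ε * ∫ ψ, f ψ ∂Q) := by
  rw [postProb, contam_restrict, integral_contam hP.restrict hQ.restrict hε0 hε1,
    integral_contam hP hQ hε0 hε1]

end Contamination

section Supremum

variable {α : Type*} {f : α → ℝ} {C : ℝ} {A : Set α}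

lemma sSup_image_nonneg (hf0 : ∀ ψ, 0 ≤ f ψ) (A : Set α) : 0 ≤ sSup (f '' A) :=
  Real.sSup_nonneg (forall_mem_image.2 fun ψ _ => hf0 ψ)

lemma bddAbove_image_of_le (hfC : ∀ ψ, f ψ ≤ C) (A : Set α) : BddAbove (f '' A) :=
  ⟨C, forall_mem_image.2 fun ψ _ => hfC ψ⟩

lemma le_sSup_image (hfC : ∀ ψ, f ψ ≤ C) {ψ : α} (hψ : ψ ∈ A) : f ψ ≤ sSup (f '' A) :=
  le_csSup (bddAbove_image_of_le hfC A) (mem_image_of_mem f hψ)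

lemma sSup_image_le_sSup_image_univ (hf0 : ∀ ψ, 0 ≤ f ψ) (hfC : ∀ ψ, f ψ ≤ C) (A : Set α) :
    sSup (f '' A) ≤ sSup (f '' univ) :=
  Real.sSup_le (forall_mem_image.2 fun ψ _ => le_sSup_image hfC (mem_univ ψ))
    (sSup_image_nonneg hf0 univ)

end Supremum

section Bounds

variable {f : Ω → ℝ} {C : ℝ} {P : Measure Ω} [IsProbabilityMeasure P] {ε : ℝ} {A : Set Ω}

lemma setIntegral_le_sSup_image (Q : Measure Ω) [IsProbabilityMeasure Q] (hf : Measurable f)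
    (hf0 : ∀ ψ, 0 ≤ f ψ) (hfC : ∀ ψ, f ψ ≤ C) (hA : MeasurableSet A) :
    ∫ ψ in A, f ψ ∂Q ≤ sSup (f '' A) :=
  calc ∫ ψ in A, f ψ ∂Q ≤ ∫ _ in A, sSup (f '' A) ∂Q :=
        setIntegral_mono_on (integrable_of_nonneg_of_le hf hf0 hfC).integrableOn
          (integrable_const _).integrableOn hA fun _ hψ => le_sSup_image hfC hψ
    _ = Q.real A * sSup (f '' A) := by rw [setIntegral_const, smul_eq_mul]
    _ ≤ sSup (f '' A) := mul_le_of_le_one_left (sSup_image_nonneg hf0 A) measureReal_le_one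

lemma postProb_contam_dirac_of_notMem (hf : Measurable f) (hf0 : ∀ ψ, 0 ≤ f ψ)
    (hfC : ∀ ψ, f ψ ≤ C) (hε : ε ∈ Ioo 0 1) (hA : MeasurableSet A) {ψ : Ω} (hψ : ψ ∉ A) :
    postProb f (contam P (Measure.dirac ψ) ε) A
      = (1 - ε) * (∫ x in A, f x ∂P) / ((1 - ε) * ∫ x, f x ∂P + ε * f ψ) := by
  classical
  rw [postProb_contam (integrable_of_nonneg_of_le hf hf0 hfC)
      (integrable_of_nonneg_of_le hf hf0 hfC) hε.1.le hε.2.le,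
    setIntegral_dirac' hf.stronglyMeasurable ψ hA, if_neg hψ, integral_dirac' f ψ
      hf.stronglyMeasurable, mul_zero, add_zero]

lemma le_postProb_contam (Q : Measure Ω) [IsProbabilityMeasure Q] (hf : Measurable f)
    (hf0 : ∀ ψ, 0 ≤ f ψ) (hfC : ∀ ψ, f ψ ≤ C) (hm : 0 < ∫ ψ, f ψ ∂P) (hε : ε ∈ Ioo 0 1)
    (hA : MeasurableSet A) :
    (1 - ε) * (∫ ψ in A, f ψ ∂P) / ((1 - ε) * ∫ ψ, f ψ ∂P + ε * sSup (f '' Aᶜ))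
      ≤ postProb f (contam P Q ε) A := by
  have hP : Integrable f P := integrable_of_nonneg_of_le hf hf0 hfC
  have hQ : Integrable f Q := integrable_of_nonneg_of_le hf hf0 hfC
  rw [postProb_contam hP hQ hε.1.le hε.2.le, ← integral_add_compl hA hQ]
  set m := ∫ ψ, f ψ ∂P
  set a := ∫ ψ in A, f ψ ∂P
  set t := sSup (f '' Aᶜ)
  set u := ∫ ψ in A, f ψ ∂Q
  set w := ∫ ψ in Aᶜ, f ψ ∂Q
  have ha : 0 ≤ a := integral_nonneg hf0
  have ham : a ≤ m := setIntegral_le_integral hP (.of_forall hf0)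
  have hu : 0 ≤ u := integral_nonneg hf0
  have hw : w ≤ t := setIntegral_le_sSup_image Q hf hf0 hfC hA.compl
  have hε0 : 0 ≤ ε := hε.1.le
  have hε1 : 0 ≤ 1 - ε := sub_nonneg.2 hε.2.le
  have hD : 0 < (1 - ε) * m + ε * t :=
    add_pos_of_pos_of_nonneg (mul_pos (sub_pos.2 hε.2) hm)
      (mul_nonneg hε0 (sSup_image_nonneg hf0 _))
  have hεu : 0 ≤ ε * u := mul_nonneg hε0 hu
  calc (1 - ε) * a / ((1 - ε) * m + ε * t)
      ≤ ((1 - ε) * a + ε * u) / ((1 - ε) * m + ε * t + ε * u) := by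
        -- `x / y ≤ (x + z) / (y + z)` for `0 ≤ x ≤ y` and `0 ≤ z`
        rw [div_le_div_iff₀ hD (by linarith)]
        nlinarith [mul_nonneg hεu (mul_nonneg hε1 (sub_nonneg.2 ham)),
          mul_nonneg hεu (mul_nonneg hε0 (sSup_image_nonneg hf0 Aᶜ))]
    _ ≤ ((1 - ε) * a + ε * u) / ((1 - ε) * m + ε * (u + w)) := by
        have hw0 : 0 ≤ w := integral_nonneg hf0
        refine div_le_div_of_nonneg_left (add_nonneg (mul_nonneg hε1 ha) hεu)
          (add_pos_of_pos_of_nonneg (mul_pos (sub_pos.2 hε.2) hm)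
            (mul_nonneg hε0 (add_nonneg hu hw0))) ?_
        nlinarith

theorem lowerPost_eq (hf : Measurable f) (hf0 : ∀ ψ, 0 ≤ f ψ) (hfC : ∀ ψ, f ψ ≤ C)
    (hm : 0 < ∫ ψ, f ψ ∂P) (hε : ε ∈ Ioo 0 1) (hA : MeasurableSet A) :
    lowerPost f P ε A
      = (1 - ε) * (∫ ψ in A, f ψ ∂P) / ((1 - ε) * ∫ ψ, f ψ ∂P + ε * sSup (f '' Aᶜ)) := by
  have : Nonempty (ProbabilityMeasure Ω) := ⟨⟨P, inferInstance⟩⟩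
  have hbdd := bddBelow_range_postProb hf0 (fun Q : ProbabilityMeasure Ω => contam P Q ε) A
  refine le_antisymm ?_ (le_ciInf fun Q => le_postProb_contam (Q : Measure Ω) hf hf0 hfC hm hε hA)
  rcases Aᶜ.eq_empty_or_nonempty with hAc | ⟨ψ₀, hψ₀⟩
  · obtain rfl : A = univ := compl_empty_iff.1 hAc
    have hP : Integrable f P := integrable_of_nonneg_of_le hf hf0 hfC
    calc lowerPost f P ε univ ≤ postProb f (contam P P ε) univ := ciInf_le hbdd ⟨P, inferInstance⟩
      _ = 1 := by
        rw [postProb, Measure.restrict_univ,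
          div_self (integral_contam_pos hf0 hP hP hm hε).ne']
      _ = _ := by
        rw [hAc, image_empty, Real.sSup_empty, mul_zero, add_zero, Measure.restrict_univ,
          div_self (mul_pos (sub_pos.2 hε.2) hm).ne']
  · refine IsClosed.apply_csSup_mem
      (g := fun x => (1 - ε) * (∫ ψ in A, f ψ ∂P) / ((1 - ε) * ∫ ψ, f ψ ∂P + ε * x))
      (K := Ici (lowerPost f P ε A)) isClosed_Ici ⟨f ψ₀, mem_image_of_mem f hψ₀⟩
      (bddAbove_image_of_le hfC Aᶜ) ?_ ?_
    · refine continuousAt_const.div (by fun_prop) (add_pos_of_pos_of_nonneg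
        (mul_pos (sub_pos.2 hε.2) hm) (mul_nonneg hε.1.le (sSup_image_nonneg hf0 _))).ne'
    · refine mapsTo_image_iff.2 fun ψ hψ => ?_
      rw [mem_Ici, Function.comp_apply, ← postProb_contam_dirac_of_notMem hf hf0 hfC hε hA hψ]
      exact ciInf_le hbdd ⟨Measure.dirac ψ, inferInstance⟩

lemma upperPost_eq_one_sub_lowerPost_compl (hf : Measurable f) (hf0 : ∀ ψ, 0 ≤ f ψ)
    (hfC : ∀ ψ, f ψ ≤ C) (hm : 0 < ∫ ψ, f ψ ∂P) (hε : ε ∈ Ioo 0 1) (hA : MeasurableSet A) :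
    upperPost f P ε A = 1 - lowerPost f P ε Aᶜ := by
  have : Nonempty (ProbabilityMeasure Ω) := ⟨⟨P, inferInstance⟩⟩
  have hP : Integrable f P := integrable_of_nonneg_of_le hf hf0 hfC
  have hcompl (Q : ProbabilityMeasure Ω) :
      postProb f (contam P Q ε) A = 1 - postProb f (contam P Q ε) Aᶜ := by
    have hQ : Integrable f (Q : Measure Ω) := integrable_of_nonneg_of_le hf hf0 hfC
    rw [postProb_compl (integrable_contam hP hQ) (integral_contam_pos hf0 hP hQ hm hε).ne' hA,
      sub_sub_cancel]
  simp_rw [upperPost, lowerPost, hcompl]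
  exact ((OrderIso.subLeft (1 : ℝ)).map_ciInf
    (bddBelow_range_postProb hf0 (fun Q : ProbabilityMeasure Ω => contam P Q ε) Aᶜ)).symm

lemma deltaPost_eq (hf : Measurable f) (hf0 : ∀ ψ, 0 ≤ f ψ) (hfC : ∀ ψ, f ψ ≤ C)
    (hm : 0 < ∫ ψ, f ψ ∂P) (hε : ε ∈ Ioo 0 1) (hA : MeasurableSet A) :
    deltaPost f P ε A = 1 - lowerPost f P ε Aᶜ - lowerPost f P ε A := by
  rw [deltaPost, upperPost_eq_one_sub_lowerPost_compl hf hf0 hfC hm hε hA]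

theorem deltaPost_le_deltaPost (hf : Measurable f) (hf0 : ∀ ψ, 0 ≤ f ψ) (hfC : ∀ ψ, f ψ ≤ C)
    (hm : 0 < ∫ ψ, f ψ ∂P) (hε : ε ∈ Ioo 0 1) {B : Set Ω} (hA : MeasurableSet A)
    (hB : MeasurableSet B)
    (hpost : postProb f P B ≤ postProb f P A) (hr : rSup f P B ≤ rSup f P A)
    (hAc : rSup f P Aᶜ = rSup f P univ) :
    deltaPost f P ε B ≤ deltaPost f P ε A := by
  have hP : Integrable f P := integrable_of_nonneg_of_le hf hf0 hfC
  rw [postProb, postProb, div_le_div_iff_of_pos_right hm] at hpost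
  rw [rSup, rSup, div_le_div_iff_of_pos_right hm] at hr
  rw [rSup, rSup, div_left_inj' hm.ne'] at hAc
  rw [deltaPost_eq hf hf0 hfC hm hε hA, deltaPost_eq hf hf0 hfC hm hε hB,
    lowerPost_eq hf hf0 hfC hm hε hA, lowerPost_eq hf hf0 hfC hm hε hB,
    lowerPost_eq hf hf0 hfC hm hε hA.compl, lowerPost_eq hf hf0 hfC hm hε hB.compl,
    compl_compl, compl_compl, setIntegral_compl hA hP, setIntegral_compl hB hP, hAc]
  set m := ∫ ψ, f ψ ∂P
  set s := sSup (f '' univ)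
  have hε1 : 0 < 1 - ε := sub_pos.2 hε.2
  have hD (t : ℝ) (ht : 0 ≤ t) : 0 < (1 - ε) * m + ε * t :=
    add_pos_of_pos_of_nonneg (mul_pos hε1 hm) (mul_nonneg hε.1.le ht)
  have hDmono {t t' : ℝ} (h : t ≤ t') : (1 - ε) * m + ε * t ≤ (1 - ε) * m + ε * t' := by
    gcongr; exact hε.1.le
  have hlowB : (1 - ε) * (∫ ψ in B, f ψ ∂P) / ((1 - ε) * m + ε * s)
      ≤ (1 - ε) * (∫ ψ in B, f ψ ∂P) / ((1 - ε) * m + ε * sSup (f '' Bᶜ)) :=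
    div_le_div_of_nonneg_left (mul_nonneg hε1.le (integral_nonneg hf0))
      (hD _ (sSup_image_nonneg hf0 _)) (hDmono (sSup_image_le_sSup_image_univ hf0 hfC _))
  have hmain := mul_le_mul_of_nonneg_left (sub_div_add_div_le_sub_div_add_div hpost
    (setIntegral_le_integral hP (.of_forall hf0)) (hD _ (sSup_image_nonneg hf0 B)) (hDmono hr)
    (hDmono (sSup_image_le_sSup_image_univ hf0 hfC A))) hε1.le
  simp only [mul_add, mul_div_assoc] at hmain hlowB ⊢
  linarith

end Bounds

section CredibleRegion

variable {f : Ω → ℝ} {P : Measure Ω} {γ : ℝ}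

lemma RBr_nonneg (hf0 : ∀ ψ, 0 ≤ f ψ) (P : Measure Ω) (ψ : Ω) : 0 ≤ RBr f P ψ :=
  div_nonneg (hf0 ψ) (integral_nonneg hf0)

lemma cGamma_nonneg : 0 ≤ cGamma f P γ :=
  Real.sInf_nonneg fun _ hk => hk.1

lemma measurableSet_credRegion (hf : Measurable f) : MeasurableSet (credRegion f P γ) :=
  measurableSet_le measurable_const (hf.div_const _)

lemma cGamma_le_rSup (hf0 : ∀ ψ, 0 ≤ f ψ) {C : ℝ} (hfC : ∀ ψ, f ψ ≤ C) (hP : Integrable f P)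
    (hm : 0 < ∫ ψ, f ψ ∂P) {A : Set Ω} (hA : 1 - γ ≤ postProb f P A) :
    cGamma f P γ ≤ rSup f P A :=
  csInf_le ⟨0, fun _ hk => hk.1⟩ ⟨div_nonneg (sSup_image_nonneg hf0 A) hm.le,
    hA.trans (postProb_mono hf0 hP fun _ hψ => div_le_div_of_nonneg_right
      (le_sSup_image hfC hψ) hm.le)⟩

lemma rSup_credRegion_compl_le (hm : 0 < ∫ ψ, f ψ ∂P) :
    rSup f P (credRegion f P γ)ᶜ ≤ cGamma f P γ := by
  rw [rSup, div_le_iff₀ hm]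
  refine Real.sSup_le (forall_mem_image.2 fun ψ hψ => ?_) (mul_nonneg cGamma_nonneg hm.le)
  exact ((div_lt_iff₀ hm).1 (not_le.1 hψ)).le

lemma postProb_credRegion_compl_le (hf : Measurable f) (hf0 : ∀ ψ, 0 ≤ f ψ) {C : ℝ}
    (hfC : ∀ ψ, f ψ ≤ C) [IsFiniteMeasure P] (hm : 0 < ∫ ψ, f ψ ∂P) (hγ : γ ≤ 1) :
    postProb f P (credRegion f P γ)ᶜ ≤ 1 - γ := by
  have hcompl : (credRegion f P γ)ᶜ = {ψ | RBr f P ψ < cGamma f P γ} := by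
    ext ψ
    simp [credRegion]
  rw [hcompl, postProb, div_le_iff₀ hm]
  refine setIntegral_setOf_lt_le (g := RBr f P) (integrable_of_nonneg_of_le hf hf0 hfC)
    (hf.div_const _) fun k hk => ?_
  rcases lt_or_ge k 0 with hk0 | hk0
  · have hempty : {ψ | RBr f P ψ ≤ k} = ∅ :=
      eq_empty_of_forall_notMem fun ψ hψ => (hk0.trans_le (RBr_nonneg hf0 P ψ)).not_ge hψ
    rw [hempty, Measure.restrict_empty, integral_zero_measure]
    exact mul_nonneg (sub_nonneg.2 hγ) hm.le
  · refine le_of_not_gt fun hkT => hk.not_ge (csInf_le ⟨0, fun _ hk => hk.1⟩ ⟨hk0, ?_⟩)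
    rw [postProb, le_div_iff₀ hm]
    exact hkT.le

end CredibleRegion

theorem credRegion_compl_min_delta_general
    (f : Ω → ℝ) (hf : Measurable f) (hf0 : ∀ ψ, 0 ≤ f ψ)
    (C : ℝ) (hfC : ∀ ψ, f ψ ≤ C)
    (P : Measure Ω) [IsProbabilityMeasure P]
    (hm : 0 < ∫ ψ, f ψ ∂P)
    (ε : ℝ) (hε : ε ∈ Set.Ioo (0 : ℝ) 1)
    (γ : ℝ)
    (A : Set Ω) (hA : MeasurableSet A)
    (hA1 : postProb f P (credRegion f P γ) ≤ postProb f P A)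
    (hA2 : rSup f P Aᶜ = rSup f P Set.univ) :
    deltaPost f P ε (credRegion f P (1 - postProb f P (credRegion f P γ)))ᶜ
      ≤ deltaPost f P ε A := by
  set γs := postProb f P (credRegion f P γ)
  have hP : Integrable f P := integrable_of_nonneg_of_le hf hf0 hfC
  refine deltaPost_le_deltaPost hf hf0 hfC hm hε hA (measurableSet_credRegion hf).compl ?_ ?_ hA2
  · calc postProb f P (credRegion f P (1 - γs))ᶜ
        ≤ 1 - (1 - γs) := postProb_credRegion_compl_le hf hf0 hfC hm
          (sub_le_self _ (postProb_nonneg hf0 _ _))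
      _ = γs := sub_sub_cancel 1 γs
      _ ≤ postProb f P A := hA1
  · exact (rSup_credRegion_compl_le hm).trans
      (cGamma_le_rSup hf0 hfC hP hm (by rwa [sub_sub_cancel]))

/-- Proposition 1 (ii): among all measurable sets `A` with `Π(A|x) ≥ γ*(x)` and
`r(Aᶜ) = r(Ψ)`, the complement `(C_{1−γ*(x)})ᶜ` of the `(1−γ*(x))`-relative belief
credible region minimizes `δ`. -/
theorem credRegion_compl_min_delta
    (f : Ω → ℝ) (hf : Measurable f) (hf0 : ∀ ψ, 0 ≤ f ψ)
    (C : ℝ) (hfC : ∀ ψ, f ψ ≤ C)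
    (P : Measure Ω) [IsProbabilityMeasure P]
    (hm : 0 < ∫ ψ, f ψ ∂P)
    (ε : ℝ) (hε : ε ∈ Set.Ioo (0 : ℝ) 1)
    (γ : ℝ) (hγ : γ ∈ Set.Ioo (0 : ℝ) 1)
    (hγs : 1 - postProb f P (credRegion f P γ) ∈ Set.Ioo (0 : ℝ) 1)
    (hC : rSup f P (credRegion f P (1 - postProb f P (credRegion f P γ)))
            = rSup f P Set.univ)
    (A : Set Ω) (hA : MeasurableSet A)
    (hA1 : postProb f P (credRegion f P γ) ≤ postProb f P A)
    (hA2 : rSup f P Aᶜ = rSup f P Set.univ) :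
    deltaPost f P ε (credRegion f P (1 - postProb f P (credRegion f P γ)))ᶜ
      ≤ deltaPost f P ε A :=
  credRegion_compl_min_delta_general f hf hf0 C hfC P hm ε hε γ A hA hA1 hA2
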